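/- (Union bound on the failure probability) In the colored stochastic block model, Pr(F) ≤ ∑_{k=1}^{⌊n/4⌋} C(n/2, k)² · P_n^{(k)}, where C(n/2,k) is the binomial coefficient and P_n^{(k)} = Pr( ∑_{i'=1}^{2k(n/2−k)} (Z_{i'} − W_{i'}) ≥ 0 ) for i.i.d. random variables W_{i'}, Z_{i'} distributed as W and Z respectively, the two families being mutually independent. -/

import Mathlib

open MeasureTheory Finset Filter
open scoped Classical ENNReal

/-- Distribution of a single colored edge: color `i.succ` with probability `r i`,
`0` (no edge) with the remaining probability. -/
noncomputable def colorMeasure {m : ℕ} (r : Fin m → ℝ) : Measure (Fin (m + 1)) :=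
  (1 - ∑ i, ENNReal.ofReal (r i)) • Measure.dirac 0
    + ∑ i, ENNReal.ofReal (r i) • Measure.dirac i.succ

/-- Two vertices on the same side of the true partition `A = {v | v < n/2}`. -/
def sameSide (n : ℕ) : Sym2 (Fin n) → Prop :=
  Sym2.lift ⟨fun u v => ((u : ℕ) < n / 2 ↔ (v : ℕ) < n / 2), fun u v => propext Iff.comm⟩

/-- The colored stochastic block model: pairs get independent colors,
within-community pairs with probabilities `p`, across with `q`. -/
noncomputable def sbmMeasure (n m : ℕ) (p q : Fin m → ℝ) :
    Measure (Sym2 (Fin n) → Fin (m + 1)) :=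
  Measure.pi fun e => if sameSide n e then colorMeasure p else colorMeasure q

/-- `l_i(S)`: the number of color-`i` edges with both endpoints in `S`. -/
noncomputable def innerCount {n m : ℕ} (ω : Sym2 (Fin n) → Fin (m + 1)) (i : Fin m)
    (S : Finset (Fin n)) : ℕ :=
  (Finset.univ.filter fun e : Sym2 (Fin n) =>
    ¬ e.IsDiag ∧ (∀ v ∈ e, v ∈ S) ∧ ω e = i.succ).card

/-- `o_i(S,T)` (and `E_i[v,S] = crossCount ω i {v} S`): the number of color-`i`
edges with one endpoint in `S` and the other in `T`. -/
noncomputable def crossCount {n m : ℕ} (ω : Sym2 (Fin n) → Fin (m + 1)) (i : Fin m)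
    (S T : Finset (Fin n)) : ℕ :=
  (Finset.univ.filter fun e : Sym2 (Fin n) =>
    ¬ e.IsDiag ∧ (∃ u ∈ S, ∃ v ∈ T, e = s(u, v)) ∧ ω e = i.succ).card

/-- The true community `A = {1, …, n/2}`. -/
def communityA (n : ℕ) : Finset (Fin n) := Finset.univ.filter fun v => (v : ℕ) < n / 2

/-- The weighted inner-edge score `∑ i (l_i(S) + l_i(Sᶜ)) log (p_i/q_i)` of the
balanced partition `(S, Sᶜ)`. -/
noncomputable def score {n m : ℕ} (p q : Fin m → ℝ) (ω : Sym2 (Fin n) → Fin (m + 1))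
    (S : Finset (Fin n)) : ℝ :=
  ∑ i, ((innerCount ω i S : ℝ) + (innerCount ω i Sᶜ : ℝ)) * Real.log (p i / q i)

/-- `F`: the event that maximum likelihood fails, i.e. some balanced partition other
than `(A, B)` has weighted inner-edge score at least that of `(A, B)`. -/
def failEvent (n m : ℕ) (p q : Fin m → ℝ) : Set (Sym2 (Fin n) → Fin (m + 1)) :=
  {ω | ∃ S : Finset (Fin n), S.card = n / 2 ∧ S ≠ communityA n ∧ S ≠ (communityA n)ᶜ ∧
    score p q ω (communityA n) ≤ score p q ω S}

/-- Law of `W`: value `log (p_k/q_k)` with probability `p_k`, `0` otherwise. -/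
noncomputable def Wdist {m : ℕ} (p q : Fin m → ℝ) : Measure ℝ :=
  (1 - ∑ k, ENNReal.ofReal (p k)) • Measure.dirac 0
    + ∑ k, ENNReal.ofReal (p k) • Measure.dirac (Real.log (p k / q k))
/-- Law of `Z`: value `log (p_k/q_k)` with probability `q_k`, `0` otherwise. -/
noncomputable def Zdist {m : ℕ} (p q : Fin m → ℝ) : Measure ℝ :=
  (1 - ∑ k, ENNReal.ofReal (q k)) • Measure.dirac 0
    + ∑ k, ENNReal.ofReal (q k) • Measure.dirac (Real.log (p k / q k))

/-- `P_n^{(k)}`-type probability: `Pr(∑_{j=1}^N (Z_j − W_j) ≥ 0)` for i.i.d. `Z_j ~ Z`,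
`W_j ~ W`, all independent. -/
noncomputable def diffProb {m : ℕ} (p q : Fin m → ℝ) (N : ℕ) : ℝ≥0∞ :=
  Measure.pi (fun _ : Fin N => (Zdist p q).prod (Wdist p q))
    {f | (0 : ℝ) ≤ ∑ j, ((f j).1 - (f j).2)}

/-! The score of a balanced partition `S` differs from that of the true partition `A` only
through the pairs that are inner for exactly one of them. If `S` swaps `k` vertices of each
community, there are `2k(n/2 - k)` such pairs on each side: those gained by `S` are
cross-community (colored with law `q`), those lost are within-community (law `p`). The colors
being independent, `score S ≥ score A` has probability `P_n^{(k)}`. Since `S` and `Sᶜ` have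
the same score and swap `k` and `n/2 - k` vertices, only `1 ≤ k ≤ n/4` is needed; there are
`C(n/2, k)^2` partitions swapping `k` vertices, and the union bound concludes. -/

open Function

namespace MeasureTheory.Measure

variable {ι α : Type*} [Fintype ι] [MeasurableSpace α] (μ : ι → Measure α)
  [∀ i, IsProbabilityMeasure (μ i)]

theorem map_pi_pair_eq_pi_prod {κ β : Type*} [Fintype κ] [MeasurableSpace β] {φ ψ : κ → ι}
    (hinj : Injective (Sum.elim φ ψ)) {g : α → β} (hg : Measurable g) :
    (Measure.pi μ).map (fun ω j => (g (ω (φ j)), g (ω (ψ j)))) =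
      Measure.pi fun j => ((μ (φ j)).map g).prod ((μ (ψ j)).map g) := by
  have _ i := isProbabilityMeasure_map (μ := μ i) hg.aemeasurable
  have hcomp : (Measure.pi μ).map (fun ω k => g (ω (Sum.elim φ ψ k))) =
      Measure.pi fun k => (μ (Sum.elim φ ψ k)).map g := by
    rw [← infinitePi_eq_pi, ← infinitePi_eq_pi, ← infinitePi_map_pi _ fun _ => hg,
      ← map_infinitePi_infinitePi_of_inj hinj, map_map (by fun_prop) (by fun_prop)]
    rfl
  have hsplit := (measurePreserving_sumPiEquivProdPi fun k => (μ (Sum.elim φ ψ k)).map g).trans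
    (measurePreserving_arrowProdEquivProdArrow β β κ (fun j => (μ (φ j)).map g)
      (fun j => (μ (ψ j)).map g)).symm
  rw [← hsplit.map_eq, ← hcomp, map_map hsplit.measurable (by fun_prop)]
  rfl

theorem pi_sum_sub_sum_nonneg_eq {ν ρ : Measure α} {G H : Finset ι}
    (hGH : Disjoint G H) {N : ℕ} (hG : #G = N) (hH : #H = N) (hν : ∀ i ∈ G, μ i = ν)
    (hρ : ∀ i ∈ H, μ i = ρ) {g : α → ℝ} (hg : Measurable g) :
    Measure.pi μ {ω | 0 ≤ ∑ i ∈ G, g (ω i) - ∑ i ∈ H, g (ω i)} =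
      Measure.pi (fun _ : Fin N => (ν.map g).prod (ρ.map g))
        {f | 0 ≤ ∑ j, ((f j).1 - (f j).2)} := by
  set eG := (G.equivFinOfCardEq hG).symm
  set eH := (H.equivFinOfCardEq hH).symm
  let φ : Fin N → ι := fun j => eG j
  let ψ : Fin N → ι := fun j => eH j
  have hinj : Injective (Sum.elim φ ψ) :=
    (Subtype.val_injective.comp eG.injective).sumElim (Subtype.val_injective.comp eH.injective)
      fun a b (hab : φ a = ψ b) =>
        disjoint_left.mp hGH (eG a).2 (show φ a ∈ H from hab ▸ (eH b).2)
  have hreindex : ∀ (s : Finset ι) (h : #s = N) (f : ι → ℝ),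
      ∑ i ∈ s, f i = ∑ j, f ((s.equivFinOfCardEq h).symm j) := fun s h f => by
    rw [← sum_coe_sort s, ← (s.equivFinOfCardEq h).symm.sum_comp]
  have hevent : {ω : ι → α | 0 ≤ ∑ i ∈ G, g (ω i) - ∑ i ∈ H, g (ω i)} =
      (fun ω j => (g (ω (φ j)), g (ω (ψ j)))) ⁻¹'
        {f | 0 ≤ ∑ j, ((f j).1 - (f j).2)} := by
    ext ω
    simp only [Set.mem_ofPred_eq, Set.mem_preimage, hreindex G hG, hreindex H hH, sum_sub_distrib]
    rfl
  rw [hevent, ← map_apply (by fun_prop) (measurableSet_le measurable_const (by fun_prop)),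
    map_pi_pair_eq_pi_prod μ hinj hg]
  congr 1
  refine congrArg Measure.pi (funext fun j => ?_)
  rw [hν _ (eG j).2, hρ _ (eH j).2]

end MeasureTheory.Measure

noncomputable def colorWeight {m : ℕ} (p q : Fin m → ℝ) : Fin (m + 1) → ℝ :=
  Fin.cases 0 fun i => Real.log (p i / q i)

section ColorMeasure

variable {m : ℕ} (p q : Fin m → ℝ)

theorem isProbabilityMeasure_colorMeasure {r : Fin m → ℝ} (h0 : ∀ i, 0 ≤ r i)
    (h1 : ∑ i, r i ≤ 1) : IsProbabilityMeasure (colorMeasure r) := by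
  have hle : ∑ i, ENNReal.ofReal (r i) ≤ 1 := by
    rw [← ENNReal.ofReal_sum_of_nonneg fun i _ => h0 i, ← ENNReal.ofReal_one]
    exact ENNReal.ofReal_le_ofReal h1
  constructor
  simp only [colorMeasure, Measure.add_apply, Measure.smul_apply, Measure.finsetSum_apply,
    measure_univ, smul_eq_mul, mul_one]
  exact tsub_add_cancel_of_le hle

theorem map_colorWeight_colorMeasure (r : Fin m → ℝ) :
    (colorMeasure r).map (colorWeight p q) =
      (1 - ∑ k, ENNReal.ofReal (r k)) • Measure.dirac 0
        + ∑ k, ENNReal.ofReal (r k) • Measure.dirac (Real.log (p k / q k)) := by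
  have hw : Measurable (colorWeight p q) := measurable_of_countable _
  rw [← Measure.mapₗ_apply_of_measurable hw, colorMeasure, map_add, map_smul, map_sum]
  simp only [Measure.mapₗ_apply_of_measurable hw, Measure.map_smul, Measure.map_dirac' hw]
  rfl

theorem map_colorWeight_colorMeasure_eq_Wdist :
    (colorMeasure p).map (colorWeight p q) = Wdist p q :=
  map_colorWeight_colorMeasure p q p

theorem map_colorWeight_colorMeasure_eq_Zdist :
    (colorMeasure q).map (colorWeight p q) = Zdist p q :=
  map_colorWeight_colorMeasure p q q

end ColorMeasure

section Pairs

variable {α : Type*} [DecidableEq α]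

def crossPairs (X Y : Finset α) : Finset (Sym2 α) :=
  (X ×ˢ Y).image fun x => s(x.1, x.2)

theorem mem_crossPairs {X Y : Finset α} {u v : α} :
    s(u, v) ∈ crossPairs X Y ↔ u ∈ X ∧ v ∈ Y ∨ v ∈ X ∧ u ∈ Y := by
  simp only [crossPairs, mem_image, mem_product, Prod.exists, Sym2.eq_iff]
  grind

theorem card_crossPairs {X Y : Finset α} (h : Disjoint X Y) :
    #(crossPairs X Y) = #X * #Y := by
  rw [crossPairs, card_image_of_injOn, card_product]
  rintro ⟨u, v⟩ huv ⟨u', v'⟩ huv' heq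
  simp only [coe_product, Set.mem_prod, mem_coe, Sym2.eq_iff] at huv huv' heq
  rcases heq with ⟨rfl, rfl⟩ | ⟨rfl, rfl⟩
  · rfl
  · exact (disjoint_left.mp h huv.1 huv'.2).elim

variable [Fintype α]

def innerPairs (S : Finset α) : Finset (Sym2 α) :=
  univ.filter fun e => ¬ e.IsDiag ∧ ((∀ v ∈ e, v ∈ S) ∨ ∀ v ∈ e, v ∈ Sᶜ)

theorem mem_innerPairs {S : Finset α} {u v : α} :
    s(u, v) ∈ innerPairs S ↔ u ≠ v ∧ (u ∈ S ↔ v ∈ S) := by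
  simp only [innerPairs, mem_filter, mem_univ, true_and, Sym2.mk_isDiag_iff, Sym2.ball,
    mem_compl]
  tauto

theorem not_isDiag_of_mem_innerPairs {S : Finset α} {e : Sym2 α} (he : e ∈ innerPairs S) :
    ¬ e.IsDiag :=
  (mem_filter.mp he).2.1

theorem innerPairs_sdiff_innerPairs (S T : Finset α) :
    innerPairs S \ innerPairs T =
      crossPairs (S ∩ T) (S \ T) ∪ crossPairs (T \ S) (S ∪ T)ᶜ := by
  ext e
  induction e using Sym2.ind with
  | _ u v =>
    simp only [Finset.mem_sdiff, mem_innerPairs, mem_union, mem_crossPairs, mem_inter,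
      mem_compl]
    grind

theorem card_innerPairs_sdiff_innerPairs (S T : Finset α) :
    #(innerPairs S \ innerPairs T) = #(S ∩ T) * #(S \ T) + #(T \ S) * #(S ∪ T)ᶜ := by
  rw [innerPairs_sdiff_innerPairs, card_union_of_disjoint, card_crossPairs, card_crossPairs]
  · exact disjoint_left.mpr fun v hv hv' => by simp_all
  · exact disjoint_left.mpr fun v hv hv' => by simp_all
  · refine disjoint_left.mpr fun e he he' => ?_
    induction e using Sym2.ind with
    | _ u v =>
      simp only [mem_crossPairs, mem_inter, Finset.mem_sdiff, mem_compl, mem_union] at he he'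
      tauto

theorem card_filter_card_inter_card_sdiff (T : Finset α) (i k : ℕ) :
    #{S : Finset α | #(S ∩ T) = i ∧ #(S \ T) = k} = (#T).choose i * (#Tᶜ).choose k := by
  rw [← card_powersetCard i T, ← card_powersetCard k Tᶜ, ← card_product]
  have hsplit {P Q : Finset α} (hP : P ⊆ T) (hQ : Q ⊆ Tᶜ) :
      (P ∪ Q) ∩ T = P ∧ (P ∪ Q) \ T = Q := by
    rw [subset_compl_iff_disjoint_right] at hQ
    rw [union_inter_distrib_right, inter_eq_left.2 hP, disjoint_iff_inter_eq_empty.1 hQ,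
      union_empty, union_sdiff_distrib, sdiff_eq_empty_iff_subset.2 hP, empty_union,
      hQ.sdiff_eq_left]
    exact ⟨rfl, rfl⟩
  refine card_nbij' (fun S => (S ∩ T, S \ T)) (fun P => P.1 ∪ P.2) ?_ ?_ ?_ ?_
  · intro S hS
    simpa using hS
  · rintro ⟨P, Q⟩ hPQ
    simp only [coe_product, Set.mem_prod, mem_coe, mem_powersetCard] at hPQ
    simp [hsplit hPQ.1.1 hPQ.2.1, hPQ.1.2, hPQ.2.2]
  · exact fun S _ => sup_inf_sdiff S T
  · rintro ⟨P, Q⟩ hPQ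
    simp only [coe_product, Set.mem_prod, mem_coe, mem_powersetCard] at hPQ
    simp [hsplit hPQ.1.1 hPQ.2.1]

end Pairs

section Balanced

variable {n : ℕ}

theorem card_communityA : #(communityA n) = n / 2 := by
  rw [communityA, Fin.card_filter_val_lt]
  omega

theorem card_compl_of_card_eq_half (hn : Even n) {S : Finset (Fin n)} (hS : #S = n / 2) :
    #Sᶜ = n / 2 := by
  rw [card_compl, Fintype.card_fin, hS]
  obtain ⟨r, rfl⟩ := hn
  omega

theorem card_innerPairs_sdiff_of_balanced (hn : Even n) {S T : Finset (Fin n)}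
    (hS : #S = n / 2) (hT : #T = n / 2) :
    #(innerPairs S \ innerPairs T) = 2 * #(S \ T) * (n / 2 - #(S \ T)) := by
  have hTS : #(T \ S) = #(S \ T) := card_sdiff_comm (hT.trans hS.symm)
  have hinter := card_inter_add_card_sdiff S T
  have hunion := card_sdiff_add_card T S
  have hcompl := card_compl_add_card (T ∪ S)
  rw [Fintype.card_fin] at hcompl
  rw [card_innerPairs_sdiff_innerPairs, hTS, union_comm]
  obtain ⟨r, rfl⟩ := hn
  have hinter' : #(S ∩ T) = (r + r) / 2 - #(S \ T) := by omega
  have hcompl' : #(T ∪ S)ᶜ = (r + r) / 2 - #(S \ T) := by omega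
  rw [hinter', hcompl']
  ring

theorem one_le_card_sdiff_communityA {S : Finset (Fin n)} (hS : #S = n / 2)
    (hSA : S ≠ communityA n) : 1 ≤ #(S \ communityA n) := by
  by_contra! h
  rw [Nat.lt_one_iff, card_eq_zero, sdiff_eq_empty_iff_subset] at h
  exact hSA (eq_of_subset_of_card_le h (by rw [card_communityA, hS]))

theorem card_compl_sdiff_communityA (hn : Even n) (S : Finset (Fin n)) :
    #(Sᶜ \ communityA n) = n / 2 - #(S \ communityA n) := by
  have hunion := card_sdiff_add_card S (communityA n)
  have hcompl := card_compl_add_card (S ∪ communityA n)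
  rw [card_communityA] at hunion
  rw [Fintype.card_fin] at hcompl
  rw [sdiff_eq_inter_compl, ← compl_union]
  obtain ⟨r, rfl⟩ := hn
  omega

def swappedPartitions (n k : ℕ) : Finset (Finset (Fin n)) :=
  {S | #S = n / 2 ∧ #(S \ communityA n) = k}

theorem card_swappedPartitions (hn : Even n) {k : ℕ} (hk : k ≤ n / 2) :
    #(swappedPartitions n k) = (n / 2).choose k ^ 2 := by
  have hfilter : swappedPartitions n k =
      ({S | #(S ∩ communityA n) = n / 2 - k ∧ #(S \ communityA n) = k} : Finset _) := by
    ext S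
    have := card_inter_add_card_sdiff S (communityA n)
    simp only [swappedPartitions, mem_filter, mem_univ, true_and]
    omega
  rw [hfilter, card_filter_card_inter_card_sdiff, card_communityA,
    card_compl_of_card_eq_half hn card_communityA, Nat.choose_symm hk, sq]

end Balanced

section Score

variable {n m : ℕ} (p q : Fin m → ℝ)

theorem sum_colorWeight_eq {ι : Type*} (s : Finset ι) (c : ι → Fin (m + 1)) :
    ∑ e ∈ s, colorWeight p q (c e) =
      ∑ i, #{e ∈ s | c e = i.succ} * Real.log (p i / q i) := by
  rw [← sum_fiberwise s c, Fin.sum_univ_succ]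
  have hfiber : ∀ j, ∑ e ∈ s with c e = j, colorWeight p q (c e) =
      #{e ∈ s | c e = j} * colorWeight p q j := fun j => by
    rw [sum_congr rfl fun e he => by rw [(mem_filter.mp he).2], sum_const, nsmul_eq_mul]
  simp only [hfiber]
  simp [colorWeight]

theorem innerCount_add_innerCount_compl (ω : Sym2 (Fin n) → Fin (m + 1)) (i : Fin m)
    (S : Finset (Fin n)) :
    innerCount ω i S + innerCount ω i Sᶜ = #{e ∈ innerPairs S | ω e = i.succ} := by
  rw [innerCount, innerCount, ← card_union_of_disjoint]
  · congr 1
    ext e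
    simp only [innerPairs, mem_union, mem_filter, mem_univ, true_and]
    tauto
  · refine disjoint_filter.mpr fun e _ he he' => ?_
    induction e using Sym2.ind with
    | _ u v => simp_all

theorem score_eq_sum_innerPairs (ω : Sym2 (Fin n) → Fin (m + 1)) (S : Finset (Fin n)) :
    score p q ω S = ∑ e ∈ innerPairs S, colorWeight p q (ω e) := by
  simp only [sum_colorWeight_eq, score, ← innerCount_add_innerCount_compl, Nat.cast_add]

theorem score_compl (ω : Sym2 (Fin n) → Fin (m + 1)) (S : Finset (Fin n)) :
    score p q ω Sᶜ = score p q ω S := by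
  simp only [score, compl_compl, add_comm]

end Score

section Model

variable {n m : ℕ} {p q : Fin m → ℝ}

theorem mem_innerPairs_communityA {e : Sym2 (Fin n)} :
    e ∈ innerPairs (communityA n) ↔ ¬ e.IsDiag ∧ sameSide n e := by
  induction e using Sym2.ind with
  | _ u v => simp [mem_innerPairs, sameSide, communityA, Sym2.mk_isDiag_iff]

theorem sbmMeasure_score_le_eq_diffProb (hp0 : ∀ i, 0 ≤ p i) (hp1 : ∑ i, p i ≤ 1)
    (hq0 : ∀ i, 0 ≤ q i) (hq1 : ∑ i, q i ≤ 1) (hn : Even n) {S : Finset (Fin n)}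
    (hS : #S = n / 2) :
    sbmMeasure n m p q {ω | score p q ω (communityA n) ≤ score p q ω S} =
      diffProb p q (2 * #(S \ communityA n) * (n / 2 - #(S \ communityA n))) := by
  set A := communityA n
  have := isProbabilityMeasure_colorMeasure hp0 hp1
  have := isProbabilityMeasure_colorMeasure hq0 hq1
  have _ e : IsProbabilityMeasure (if sameSide n e then colorMeasure p else colorMeasure q) := by
    split_ifs <;> infer_instance
  have hevent : {ω | score p q ω A ≤ score p q ω S} = {ω | 0 ≤
      ∑ e ∈ innerPairs S \ innerPairs A, colorWeight p q (ω e) -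
        ∑ e ∈ innerPairs A \ innerPairs S, colorWeight p q (ω e)} := by
    ext ω
    rw [Set.mem_ofPred_eq, Set.mem_ofPred_eq, sum_sdiff_sub_sum_sdiff, sub_nonneg,
      score_eq_sum_innerPairs, score_eq_sum_innerPairs]
  rw [hevent, sbmMeasure, Measure.pi_sum_sub_sum_nonneg_eq _ disjoint_sdiff_sdiff
    (card_innerPairs_sdiff_of_balanced hn hS card_communityA)
    (by rw [card_innerPairs_sdiff_of_balanced hn card_communityA hS,
      card_sdiff_comm (card_communityA.trans hS.symm)])
    (ν := colorMeasure q) (ρ := colorMeasure p) ?_ ?_ (measurable_of_countable _),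
    map_colorWeight_colorMeasure_eq_Wdist, map_colorWeight_colorMeasure_eq_Zdist, diffProb]
  · intro e he
    rw [Finset.mem_sdiff, mem_innerPairs_communityA] at he
    rw [if_neg fun h => he.2 ⟨not_isDiag_of_mem_innerPairs he.1, h⟩]
  · intro e he
    rw [Finset.mem_sdiff, mem_innerPairs_communityA] at he
    rw [if_pos he.1.2]

theorem failEvent_subset (hn : Even n) :
    failEvent n m p q ⊆ ⋃ k ∈ Icc 1 (n / 4), ⋃ S ∈ swappedPartitions n k,
      {ω | score p q ω (communityA n) ≤ score p q ω S} := by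
  rintro ω ⟨S, hS, hSA, hSAc, hscore⟩
  have hSc : #Sᶜ = n / 2 := card_compl_of_card_eq_half hn hS
  have hScA : Sᶜ ≠ communityA n := fun h => hSAc (by rw [← h, compl_compl])
  have hk := one_le_card_sdiff_communityA hS hSA
  have hk' := one_le_card_sdiff_communityA hSc hScA
  have hsum := card_compl_sdiff_communityA hn S
  simp only [Set.mem_iUnion, exists_prop, mem_Icc, swappedPartitions, mem_filter, mem_univ,
    true_and]
  by_cases hle : #(S \ communityA n) ≤ n / 4
  · exact ⟨_, ⟨hk, hle⟩, S, ⟨hS, rfl⟩, hscore⟩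
  · refine ⟨_, ⟨hk', by omega⟩, Sᶜ, ⟨hSc, rfl⟩, ?_⟩
    rwa [Set.mem_ofPred_eq, score_compl]

end Model

theorem union_bound_general (m : ℕ) (α β : Fin m → ℝ)
    (hα : ∀ i, 0 < α i) (hβ : ∀ i, 0 < β i)
    (n : ℕ) (hn : Even n)
    (hp : ∑ i, α i * Real.log n / n ≤ 1) (hq : ∑ i, β i * Real.log n / n ≤ 1) :
    sbmMeasure n m (fun i => α i * Real.log n / n) (fun i => β i * Real.log n / n)
        (failEvent n m (fun i => α i * Real.log n / n) (fun i => β i * Real.log n / n)) ≤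
      ∑ k ∈ Finset.Icc 1 (n / 4),
        ((n / 2).choose k : ℝ≥0∞) ^ 2 *
          diffProb (fun i => α i * Real.log n / n) (fun i => β i * Real.log n / n)
            (2 * k * (n / 2 - k)) := by
  set p : Fin m → ℝ := fun i => α i * Real.log n / n
  set q : Fin m → ℝ := fun i => β i * Real.log n / n
  have hp0 (i : Fin m) : 0 ≤ p i := by have := hα i; positivity
  have hq0 (i : Fin m) : 0 ≤ q i := by have := hβ i; positivity
  refine (measure_mono (failEvent_subset hn)).trans <| (measure_biUnion_finset_le _ _).trans <|
    sum_le_sum fun k hk => (measure_biUnion_finset_le _ _).trans_eq ?_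
  have hterm : ∀ S ∈ swappedPartitions n k, sbmMeasure n m p q
      {ω | score p q ω (communityA n) ≤ score p q ω S} =
        diffProb p q (2 * k * (n / 2 - k)) := by
    intro S hS
    simp only [swappedPartitions, mem_filter] at hS
    exact hS.2.2 ▸ sbmMeasure_score_le_eq_diffProb hp0 hp hq0 hq hn hS.2.1
  rw [sum_congr rfl hterm, sum_const, card_swappedPartitions hn (by grind), nsmul_eq_mul,
    Nat.cast_pow]

theorem union_bound (m : ℕ) (hm : 0 < m) (α β : Fin m → ℝ)
    (hα : ∀ i, 0 < α i) (hβ : ∀ i, 0 < β i) (hne : ∃ i, α i ≠ β i)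
    (n : ℕ) (hn : Even n)
    (hp : ∑ i, α i * Real.log n / n ≤ 1) (hq : ∑ i, β i * Real.log n / n ≤ 1) :
    sbmMeasure n m (fun i => α i * Real.log n / n) (fun i => β i * Real.log n / n)
        (failEvent n m (fun i => α i * Real.log n / n) (fun i => β i * Real.log n / n)) ≤
      ∑ k ∈ Finset.Icc 1 (n / 4),
        ((n / 2).choose k : ℝ≥0∞) ^ 2 *
          diffProb (fun i => α i * Real.log n / n) (fun i => β i * Real.log n / n)
            (2 * k * (n / 2 - k)) :=
  union_bound_general m α β hα hβ n hn hp hq
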